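/- Let U and W be disjoint sets with |U| odd and |W| even, and let L be a subgraph of K_{U∪W} - K_U with exactly μ ∈ {1,2} pure edges such that every vertex of L has positive even degree. Suppose |E(L)| ≤ min(2(|U|+2), 2|W|+1, |U|+|W|). If L contains either at least two vertices of degree 4 or at least one vertex of degree at least 6, then there exist twin vertices x and y in K_{U∪W} - K_U with deg_L(x) ≥ 4 and y ∉ V(L). -/

import Mathlib

open SimpleGraph

/-- The complete graph on the vertex type with all edges inside `U` removed:
`K_{U ∪ W} - K_U` when `U ∪ W` is the whole vertex set. -/
def holeGraphOn {V : Type*} (U : Set V) : SimpleGraph V where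
  Adj x y := x ≠ y ∧ ¬ (x ∈ U ∧ y ∈ U)
  symm := ⟨fun x y ⟨h1, h2⟩ => ⟨h1.symm, fun h => h2 ⟨h.2, h.1⟩⟩⟩
  loopless := ⟨fun x ⟨h, _⟩ => h rfl⟩

/-- `x` and `y` are twin vertices of `G`. -/
def IsTwin {V : Type*} (G : SimpleGraph V) (x y : V) : Prop :=
  G.neighborSet x \ {y} = G.neighborSet y \ {x}

/-!
The class `U` is independent in `L`, so its degrees add up to `|E(L)| - μ`, and those on `W`
to `|E(L)| + μ`. Every vertex of `L` has degree at least `2`, so if a class `A ∈ {U, W}` carries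
more excess `∑ (deg - 2)` than `∑_A deg - 2|A|`, some vertex of `A` lies outside `L`. The edge
bounds give `∑_A deg < 2|A| + 4` for both classes and `∑_A deg < 2|A| + 2` for at least one,
which covers the excess `4` of two degree-4 vertices in one class or of a vertex of degree
`≥ 6`, and the excess `2` of a degree-4 vertex in each class. The vertices of a class are
pairwise twins in `K_{U ∪ W} - K_U`.
-/

open Finset

namespace SimpleGraph

variable {V : Type*} [Fintype V] {G : SimpleGraph V} [DecidableRel G.Adj]

lemma ncard_neighborSet_eq_degree (v : V) : (G.neighborSet v).ncard = G.degree v := by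
  rw [← card_neighborFinset_eq_degree, ← Set.ncard_coe_finset, coe_neighborFinset]

lemma ncard_edgeSet_eq_card_edgeFinset : G.edgeSet.ncard = #G.edgeFinset := by
  rw [← coe_edgeFinset, Set.ncard_coe_finset]

lemma two_le_degree_of_even {v : V} (hv : v ∈ G.support) (h : Even (G.degree v)) :
    2 ≤ G.degree v := by
  have := (G.degree_pos_iff_mem_support v).mpr hv
  obtain ⟨k, hk⟩ := h
  omega

lemma IsIndepSet.sum_degree_add_card_edges_avoiding [DecidableEq V] {s : Finset V}
    (hs : G.IsIndepSet s) :
    ∑ v ∈ s, G.degree v + #{e ∈ G.edgeFinset | ∀ v ∈ e, v ∉ s} = #G.edgeFinset := by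
  have hdisj : (s : Set V).PairwiseDisjoint fun v => G.incidenceFinset v := by
    intro x hx y hy hxy
    rw [Function.onFun, Finset.disjoint_left]
    intro e hex hey
    exact hs hx hy hxy (G.adj_of_mem_incidenceSet hxy
      ((G.mem_incidenceFinset x e).mp hex) ((G.mem_incidenceFinset y e).mp hey))
  have hmeet : s.biUnion (fun v => G.incidenceFinset v) =
      {e ∈ G.edgeFinset | ¬ ∀ v ∈ e, v ∉ s} := by
    ext e
    simp only [mem_biUnion, incidenceFinset_eq_filter, mem_filter]
    aesop
  simp_rw [← card_incidenceFinset_eq_degree]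
  rw [← card_biUnion hdisj, hmeet, add_comm, card_filter_add_card_filter_not]

lemma exists_notMem_support_of_sum_degree_lt {A B : Finset V} (hBA : B ⊆ A)
    (heven : ∀ v ∈ A, Even (G.degree v))
    (h : ∑ v ∈ A, G.degree v < 2 * #A + ∑ v ∈ B, (G.degree v - 2)) :
    ∃ y ∈ A, y ∉ G.support := by
  by_contra! hA
  have hsplit : ∑ v ∈ A, G.degree v = 2 * #A + ∑ v ∈ A, (G.degree v - 2) := by
    rw [mul_comm, ← smul_eq_mul, ← sum_const, ← sum_add_distrib]
    refine sum_congr rfl fun v hv => ?_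
    have := two_le_degree_of_even (hA v hv) (heven v hv)
    omega
  have := sum_le_sum_of_subset (f := fun v => G.degree v - 2) hBA
  omega

end SimpleGraph

section HoleGraph

variable {V : Type*} [Fintype V] (U : Set V) [DecidablePred (· ∈ U)]

lemma card_filter_mem_eq_ncard : #({v | v ∈ U} : Finset V) = U.ncard := by
  rw [← Set.ncard_coe_finset, coe_filter_univ]
  rfl

def twinClass (x : V) : Finset V := {v | v ∈ U ↔ x ∈ U}

variable {U}

lemma sum_degree_add_ncard_edges_compl {L : SimpleGraph V} [DecidableRel L.Adj]
    (hU : ∀ x y, L.Adj x y → ¬ (x ∈ U ∧ y ∈ U)) :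
    ∑ v ∈ ({v | v ∈ U} : Finset V), L.degree v + {e ∈ L.edgeSet | ∀ v ∈ e, v ∈ Uᶜ}.ncard =
      L.edgeSet.ncard := by
  classical
  have hindep : L.IsIndepSet ({v | v ∈ U} : Finset V) := fun x hx y hy _ hxy =>
    hU x y hxy ⟨by simpa using hx, by simpa using hy⟩
  convert hindep.sum_degree_add_card_edges_avoiding using 2
  · rw [← Set.ncard_coe_finset]
    congr 1
    ext e
    simp
  · exact ncard_edgeSet_eq_card_edgeFinset

@[simp]
lemma mem_twinClass {x v : V} : v ∈ twinClass U x ↔ (v ∈ U ↔ x ∈ U) := by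
  simp [twinClass]

lemma isTwin_of_mem_twinClass {x y : V} (h : y ∈ twinClass U x) : IsTwin (holeGraphOn U) x y := by
  rw [mem_twinClass] at h
  ext z
  simp only [Set.mem_sdiff, mem_neighborSet, Set.mem_singleton_iff, holeGraphOn]
  aesop

lemma twinClass_of_mem {x : V} (hx : x ∈ U) : twinClass U x = ({v | v ∈ U} : Finset V) := by
  ext v
  simp [hx]

lemma twinClass_of_notMem {x : V} (hx : x ∉ U) : twinClass U x = ({v | v ∉ U} : Finset V) := by
  ext v
  simp [hx]

variable {L : SimpleGraph V} [DecidableRel L.Adj]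

lemma exists_isTwin_of_sum_degree_twinClass_lt (heven : ∀ v, Even (L.degree v)) {x : V}
    {B : Finset V} (hB : B ⊆ twinClass U x) (hx : 4 ≤ L.degree x)
    (h : ∑ v ∈ twinClass U x, L.degree v < 2 * #(twinClass U x) + ∑ v ∈ B, (L.degree v - 2)) :
    ∃ x y, IsTwin (holeGraphOn U) x y ∧ 4 ≤ L.degree x ∧ y ∉ L.support := by
  obtain ⟨y, hy, hyL⟩ := exists_notMem_support_of_sum_degree_lt hB (fun v _ => heven v) h
  exact ⟨x, y, isTwin_of_mem_twinClass hy, hx, hyL⟩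

lemma exists_isTwin_of_sum_degree_twinClass_bounds (heven : ∀ v, Even (L.degree v))
    (hclass : ∀ x, ∑ v ∈ twinClass U x, L.degree v < 2 * #(twinClass U x) + 4)
    (hcross : ∀ x x', x' ∉ twinClass U x →
      ∑ v ∈ twinClass U x, L.degree v < 2 * #(twinClass U x) + 2 ∨
      ∑ v ∈ twinClass U x', L.degree v < 2 * #(twinClass U x') + 2)
    (hbig : (∃ x x', x ≠ x' ∧ L.degree x = 4 ∧ L.degree x' = 4) ∨ ∃ x, 6 ≤ L.degree x) :
    ∃ x y, IsTwin (holeGraphOn U) x y ∧ 4 ≤ L.degree x ∧ y ∉ L.support := by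
  classical
  rcases hbig with ⟨x, x', hne, hx, hx'⟩ | ⟨x, hx⟩
  · by_cases hxx' : x' ∈ twinClass U x
    · refine exists_isTwin_of_sum_degree_twinClass_lt heven (B := {x, x'})
        (by simp [insert_subset_iff, hxx']) hx.ge ?_
      rw [sum_pair hne, hx, hx']
      exact hclass x
    · rcases hcross x x' hxx' with h | h
      · refine exists_isTwin_of_sum_degree_twinClass_lt heven (B := {x}) (by simp) hx.ge ?_
        rwa [sum_singleton, hx]
      · refine exists_isTwin_of_sum_degree_twinClass_lt heven (B := {x'}) (by simp) hx'.ge ?_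
        rwa [sum_singleton, hx']
  · refine exists_isTwin_of_sum_degree_twinClass_lt heven (x := x) (B := {x}) (by simp)
      (by omega) ?_
    rw [sum_singleton]
    have := hclass x
    omega

end HoleGraph

theorem stmt8_general {V : Type*} [Fintype V] (U W : Set V)
    (hdisj : Disjoint U W) (hcover : U ∪ W = Set.univ)
    (L : SimpleGraph V)
    (hsub : ∀ x y, L.Adj x y → ¬ (x ∈ U ∧ y ∈ U))
    (μ : ℕ) (hμ : μ = 1 ∨ μ = 2)
    (hpure : {e ∈ L.edgeSet | ∀ v ∈ e, v ∈ W}.ncard = μ)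
    (heven : ∀ v, Even (L.neighborSet v).ncard)
    (hE1 : L.edgeSet.ncard ≤ 2 * (U.ncard + 2))
    (hE2 : L.edgeSet.ncard ≤ 2 * W.ncard + 1)
    (hE3 : L.edgeSet.ncard ≤ U.ncard + W.ncard)
    (hbig : (∃ x x', x ≠ x' ∧ (L.neighborSet x).ncard = 4 ∧ (L.neighborSet x').ncard = 4) ∨
            (∃ x, 6 ≤ (L.neighborSet x).ncard)) :
    ∃ x y, IsTwin (holeGraphOn U) x y ∧ 4 ≤ (L.neighborSet x).ncard ∧ y ∉ L.support := by
  classical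
  obtain rfl : W = Uᶜ := (IsCompl.compl_eq ⟨hdisj, codisjoint_iff.mpr hcover⟩).symm
  simp only [ncard_neighborSet_eq_degree] at hbig heven ⊢
  have hsum := sum_degree_add_ncard_edges_compl (L := L) hsub
  have hsum_compl : ∑ v ∈ ({v | v ∈ U} : Finset V), L.degree v +
      ∑ v ∈ ({v | v ∉ U} : Finset V), L.degree v = 2 * #L.edgeFinset :=
    (sum_filter_add_sum_filter_not _ _ _).trans (sum_degrees_eq_twice_card_edges L)
  rw [hpure] at hsum
  rw [ncard_edgeSet_eq_card_edgeFinset] at hsum hE1 hE2 hE3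
  have hcard := card_filter_mem_eq_ncard U
  have hcard_compl : #({v | v ∉ U} : Finset V) = Uᶜ.ncard := card_filter_mem_eq_ncard Uᶜ
  refine exists_isTwin_of_sum_degree_twinClass_bounds heven (fun x => ?_) (fun x x' hx' => ?_) hbig
  · by_cases hx : x ∈ U
    · rw [twinClass_of_mem hx]; omega
    · rw [twinClass_of_notMem hx]; omega
  · by_cases hx : x ∈ U
    · rw [twinClass_of_mem hx, twinClass_of_notMem (by simpa [hx] using hx')]; omega
    · rw [twinClass_of_notMem hx, twinClass_of_mem (by simpa [hx] using hx')]; omega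

theorem stmt8 {V : Type*} [Fintype V] (U W : Set V)
    (hdisj : Disjoint U W) (hcover : U ∪ W = Set.univ)
    (hUodd : Odd U.ncard) (hWeven : Even W.ncard)
    (L : SimpleGraph V)
    (hsub : ∀ x y, L.Adj x y → ¬ (x ∈ U ∧ y ∈ U))
    (μ : ℕ) (hμ : μ = 1 ∨ μ = 2)
    (hpure : {e ∈ L.edgeSet | ∀ v ∈ e, v ∈ W}.ncard = μ)
    (heven : ∀ v, Even (L.neighborSet v).ncard)
    (hE1 : L.edgeSet.ncard ≤ 2 * (U.ncard + 2))
    (hE2 : L.edgeSet.ncard ≤ 2 * W.ncard + 1)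
    (hE3 : L.edgeSet.ncard ≤ U.ncard + W.ncard)
    (hbig : (∃ x x', x ≠ x' ∧ (L.neighborSet x).ncard = 4 ∧ (L.neighborSet x').ncard = 4) ∨
            (∃ x, 6 ≤ (L.neighborSet x).ncard)) :
    ∃ x y, IsTwin (holeGraphOn U) x y ∧ 4 ≤ (L.neighborSet x).ncard ∧ y ∉ L.support :=
  stmt8_general U W hdisj hcover L hsub μ hμ hpure heven hE1 hE2 hE3 hbig
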